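/- arXiv:0711.1694 — 4 statements merged into one kernel-verified Lean document; each statement's English description precedes it below -/
import Mathlib

section
/- The total probability that the measured walk ever reaches the final vertex is bounded by the norm squared of the component of the initial state outside the symmetry-protected subspace: for any unit vector ψ ∈ V, the sum over all t ≥ 1 of p(t) = ‖P_f U (Q_f U)^{t−1} ψ‖² is at most ‖(1 − P) ψ‖². In particular, if P ψ ≠ 0 then the total hitting probability is strictly less than 1 (the hitting time is infinite). -/
/-!
Vectors in the range of `P` are never detected: `P` commutes with `U` and is orthogonal to `P_f`,
so `(Q_f U)^t P = P U^t` and every amplitude `P_f U (Q_f U)^t` kills `P ψ`. The walk started at `ψ`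
therefore has the same amplitudes as the walk started at `(1 - P) ψ`. Since `U` is an isometry and
`P_f` an orthogonal projection, each step splits `‖x‖²` as `‖P_f U x‖² + ‖Q_f U x‖²`; the partial sums
of the hitting probabilities telescope to `‖(1 - P) ψ‖² - ‖(Q_f U)^n (1 - P) ψ‖²`.
-/

open scoped InnerProductSpace

section Ring

variable {R : Type*} [Ring R]

theorem mul_mul_one_sub_mul_pow_mul_eq_zero {U Pf P : R} (hUP : U * P = P * U) (hPfP : Pf * P = 0)
    (t : ℕ) : Pf * U * ((1 - Pf) * U) ^ t * P = 0 := by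
  have hstep : SemiconjBy P U ((1 - Pf) * U) := by
    rw [SemiconjBy, mul_assoc, hUP, ← mul_assoc, sub_mul, one_mul, hPfP, sub_zero]
  rw [mul_assoc, (hstep.pow_right t).eq.symm, ← mul_assoc, mul_assoc Pf, hUP, ← mul_assoc, hPfP,
    zero_mul, zero_mul]

end Ring

section Telescoping

variable {E R : Type*} [SeminormedAddCommGroup E] [Semiring R] [Module R E]

theorem sum_range_norm_sq_apply_pow_add_norm_sq_pow {F G : Module.End R E}
    (hFG : ∀ x, ‖F x‖ ^ 2 + ‖G x‖ ^ 2 = ‖x‖ ^ 2) (x : E) (n : ℕ) :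
    ∑ t ∈ Finset.range n, ‖F ((G ^ t) x)‖ ^ 2 + ‖(G ^ n) x‖ ^ 2 = ‖x‖ ^ 2 := by
  induction n with
  | zero => simp
  | succ n ih =>
    rw [Finset.sum_range_succ, add_assoc, pow_succ' G n, Module.End.mul_apply, hFG, ih]

theorem tsum_norm_sq_apply_pow_le {F G : Module.End R E}
    (hFG : ∀ x, ‖F x‖ ^ 2 + ‖G x‖ ^ 2 = ‖x‖ ^ 2) (x : E) :
    ∑' t : ℕ, ‖F ((G ^ t) x)‖ ^ 2 ≤ ‖x‖ ^ 2 :=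
  Real.tsum_le_of_sum_range_le (fun _ => by positivity) fun n =>
    le_of_add_le_of_nonneg_left (sum_range_norm_sq_apply_pow_add_norm_sq_pow hFG x n).le
      (by positivity)

end Telescoping

section InnerProductSpace

variable {𝕜 V : Type*} [RCLike 𝕜] [NormedAddCommGroup V] [InnerProductSpace 𝕜 V]

theorem LinearMap.IsSymmetricProjection.norm_sq_add_norm_sq_one_sub {p : V →ₗ[𝕜] V}
    (hp : p.IsSymmetricProjection) (x : V) : ‖p x‖ ^ 2 + ‖(1 - p) x‖ ^ 2 = ‖x‖ ^ 2 := by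
  have horth : ⟪p x, (1 - p) x⟫_𝕜 = 0 := by
    rw [hp.isSymmetric, ← Module.End.mul_apply, mul_sub, mul_one, hp.isIdempotentElem.eq, sub_self,
      LinearMap.zero_apply, inner_zero_right]
  rw [sq, sq, ← norm_add_sq_eq_norm_sq_add_norm_sq_of_inner_eq_zero _ _ horth, ← sq,
    ← LinearMap.add_apply, add_sub_cancel, Module.End.one_apply]

theorem LinearMap.norm_map_of_mem_unitary [FiniteDimensional 𝕜 V] {U : V →ₗ[𝕜] V}
    (hU : U ∈ unitary (V →ₗ[𝕜] V)) (x : V) : ‖U x‖ = ‖x‖ := by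
  have hinner : ⟪U x, U x⟫_𝕜 = ⟪x, x⟫_𝕜 := by
    rw [← LinearMap.adjoint_inner_left, ← Module.End.mul_apply, ← LinearMap.star_eq_adjoint,
      Unitary.star_mul_self_of_mem hU, Module.End.one_apply]
  rw [@norm_eq_sqrt_re_inner 𝕜, @norm_eq_sqrt_re_inner 𝕜 _ _ _ _ x, hinner]

theorem norm_sq_projection_mul_add_norm_sq_one_sub_mul [FiniteDimensional 𝕜 V]
    {U Pf : V →ₗ[𝕜] V} (hU : U ∈ unitary (V →ₗ[𝕜] V)) (hPf : Pf.IsSymmetricProjection) (x : V) :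
    ‖(Pf * U) x‖ ^ 2 + ‖((1 - Pf) * U) x‖ ^ 2 = ‖x‖ ^ 2 := by
  rw [Module.End.mul_apply, Module.End.mul_apply, hPf.norm_sq_add_norm_sq_one_sub,
    LinearMap.norm_map_of_mem_unitary hU]

end InnerProductSpace

/-- The total probability that the measured walk ever reaches the final vertex,
`∑_{t ≥ 1} ‖P_f U (Q_f U)^(t-1) ψ‖²` (written below as a sum over `t : ℕ` with
exponent `t`), is bounded by `‖(1 - P) ψ‖²`; in particular, if `P ψ ≠ 0` it is
strictly less than `1`, i.e. the hitting time is infinite. Here `Q_f = 1 - P_f`. -/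
theorem total_hitting_probability_le_of_protected_component
    {V : Type*} [NormedAddCommGroup V] [InnerProductSpace ℂ V] [FiniteDimensional ℂ V]
    (U Pf P : V →ₗ[ℂ] V)
    (hU : U ∈ unitary (V →ₗ[ℂ] V))
    (hPf_idem : Pf * Pf = Pf) (hPf_sa : LinearMap.adjoint Pf = Pf)
    (hP_idem : P * P = P) (hP_sa : LinearMap.adjoint P = P)
    (hUP : U * P = P * U) (hPfP : Pf * P = 0)
    (ψ : V) (hψ : ‖ψ‖ = 1) :
    (∑' t : ℕ, ‖(Pf * U * ((1 - Pf) * U) ^ t) ψ‖ ^ 2) ≤ ‖(1 - P) ψ‖ ^ 2 ∧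
      (P ψ ≠ 0 → (∑' t : ℕ, ‖(Pf * U * ((1 - Pf) * U) ^ t) ψ‖ ^ 2) < 1) := by
  have hPf : Pf.IsSymmetricProjection :=
    LinearMap.isStarProjection_iff_isSymmetricProjection.mp ⟨hPf_idem, hPf_sa⟩
  have hP : P.IsSymmetricProjection :=
    LinearMap.isStarProjection_iff_isSymmetricProjection.mp ⟨hP_idem, hP_sa⟩
  have hamplitude (t : ℕ) :
      (Pf * U * ((1 - Pf) * U) ^ t) ψ = (Pf * U) ((((1 - Pf) * U) ^ t) ((1 - P) ψ)) := by
    rw [← Module.End.mul_apply, ← Module.End.mul_apply, mul_one_sub,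
      mul_mul_one_sub_mul_pow_mul_eq_zero hUP hPfP, sub_zero]
  have hle : (∑' t : ℕ, ‖(Pf * U * ((1 - Pf) * U) ^ t) ψ‖ ^ 2) ≤ ‖(1 - P) ψ‖ ^ 2 := by
    simpa only [hamplitude] using
      tsum_norm_sq_apply_pow_le (norm_sq_projection_mul_add_norm_sq_one_sub_mul hU hPf) ((1 - P) ψ)
  refine ⟨hle, fun hPψ => hle.trans_lt ?_⟩
  have hsplit := hP.norm_sq_add_norm_sq_one_sub ψ
  have hpos : 0 < ‖P ψ‖ ^ 2 := by positivity
  nlinarith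
end

section
/- Closed form for the classical hitting time of the simple random walk on the n-dimensional hypercube: let n ≥ 1 and let τ : {0, 1, …, n} → ℚ be the unique function satisfying τ(n) = 0, τ(0) = τ(1) + 1, and τ(x) = ((n−x)/n)·τ(x+1) + (x/n)·τ(x−1) + 1 for 1 ≤ x ≤ n−1. Then τ(0) = Σ_{x=0}^{n−1} ( Σ_{j=0}^{x−1} C(n, x−j) + 1 ) / C(n−1, x), where C(a,b) denotes the binomial coefficient. -/
/-!
The second-order recurrence for `τ` is a first-order recurrence for the increments
`d x = τ x - τ (x + 1)`, namely `(n - x - 1) d (x + 1) = (x + 1) d x + n` with `d 0 = 1`.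
Since `C(n-1, x+1) (x+1) = C(n-1, x) (n-1-x)` and `n C(n-1, x) = C(n, x+1) (x+1)`, the summand of
the closed form satisfies the same recurrence, so it equals `d x`, and `τ 0 = τ 0 - τ n`
telescopes into the sum of the increments.
-/

open Finset

namespace HypercubeHittingTime

lemma cast_choose_succ_mul {R : Type*} [CommRing R] (m k : ℕ) (hk : k ≤ m) :
    (m.choose (k + 1) : R) * (k + 1) = m.choose k * (m - k) := by
  have h := congrArg (Nat.cast (R := R)) (Nat.choose_succ_right_eq m k)
  push_cast [Nat.cast_sub hk] at h
  exact h

lemma sum_range_choose_sub_succ {R : Type*} [AddCommMonoidWithOne R] (n x : ℕ) :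
    ∑ j ∈ range (x + 1), (n.choose (x + 1 - j) : R) =
      ∑ j ∈ range x, (n.choose (x - j) : R) + n.choose (x + 1) := by
  rw [sum_range_succ']
  simp

variable {K : Type*} [Field K]

def incrementClosedForm (n x : ℕ) : K :=
  ((∑ j ∈ range x, (n.choose (x - j) : K)) + 1) / ((n - 1).choose x : K)

lemma incrementClosedForm_zero (n : ℕ) : incrementClosedForm (K := K) n 0 = 1 := by
  simp [incrementClosedForm]

lemma incrementClosedForm_succ [CharZero K] {n x : ℕ} (hx : x + 1 < n) :
    ((n : K) - (x + 1)) * incrementClosedForm n (x + 1) =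
      (x + 1) * incrementClosedForm n x + n := by
  obtain ⟨m, rfl⟩ : ∃ m, n = m + 1 := ⟨n - 1, by omega⟩
  have hsucc : (m.choose (x + 1) : K) * (x + 1) = m.choose x * (m - x) :=
    cast_choose_succ_mul m x (by omega)
  have hpascal : ((m + 1 : ℕ) : K) * m.choose x = (m + 1).choose (x + 1) * (x + 1) := by
    exact_mod_cast Nat.add_one_mul_choose_eq m x
  have hc : (m.choose x : K) ≠ 0 := by exact_mod_cast (Nat.choose_pos (by omega)).ne'
  have hc' : (m.choose (x + 1) : K) ≠ 0 := by exact_mod_cast (Nat.choose_pos (by omega)).ne'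
  simp only [incrementClosedForm, Nat.add_sub_cancel, sum_range_choose_sub_succ]
  field_simp
  push_cast at hpascal ⊢
  linear_combination -(∑ j ∈ range x, ((m + 1).choose (x - j) : K) + (m + 1).choose (x + 1) + 1)
    * hsucc - (m.choose (x + 1) : K) * hpascal

lemma hittingTime_sub_succ_recurrence [CharZero K] {n : ℕ} {τ : ℕ → K}
    (hrec : ∀ x : ℕ, 1 ≤ x → x ≤ n - 1 →
      τ x = ((n : K) - x) / n * τ (x + 1) + (x : K) / n * τ (x - 1) + 1)
    {x : ℕ} (hx : x + 1 < n) :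
    ((n : K) - (x + 1)) * (τ (x + 1) - τ (x + 2)) = (x + 1) * (τ x - τ (x + 1)) + n := by
  have hn : (n : K) ≠ 0 := by exact_mod_cast (show n ≠ 0 by omega)
  have h := hrec (x + 1) (by omega) (by omega)
  rw [Nat.add_sub_cancel] at h
  push_cast at h
  field_simp at h
  linear_combination h

lemma eq_of_recurrence [CharZero K] {n : ℕ} {d e : ℕ → K} (h0 : d 0 = e 0)
    (hd : ∀ x, x + 1 < n → ((n : K) - (x + 1)) * d (x + 1) = (x + 1) * d x + n)
    (he : ∀ x, x + 1 < n → ((n : K) - (x + 1)) * e (x + 1) = (x + 1) * e x + n) :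
    ∀ x < n, d x = e x
  | 0, _ => h0
  | x + 1, hx => by
    have hcoef : (n : K) - (x + 1) ≠ 0 := by
      rw [sub_ne_zero]; exact_mod_cast hx.ne'
    refine mul_left_cancel₀ hcoef ?_
    rw [hd x hx, he x hx, eq_of_recurrence h0 hd he x (by omega)]

end HypercubeHittingTime

open HypercubeHittingTime

theorem hypercube_classical_hitting_time_closed_form_general
    (n : ℕ) (τ : ℕ → ℚ)
    (hend : τ n = 0)
    (h0 : τ 0 = τ 1 + 1)
    (hrec : ∀ x : ℕ, 1 ≤ x → x ≤ n - 1 →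
      τ x = ((n : ℚ) - (x : ℚ)) / (n : ℚ) * τ (x + 1)
        + (x : ℚ) / (n : ℚ) * τ (x - 1) + 1) :
    τ 0 = ∑ x ∈ Finset.range n,
      ((∑ j ∈ Finset.range x, (n.choose (x - j) : ℚ)) + 1) / ((n - 1).choose x : ℚ) := by
  have hincrement : ∀ x < n, τ x - τ (x + 1) = incrementClosedForm n x :=
    eq_of_recurrence (by rw [incrementClosedForm_zero, h0, add_sub_cancel_left])
      (fun _ hx => hittingTime_sub_succ_recurrence hrec hx) (fun _ hx => incrementClosedForm_succ hx)
  rw [← sub_zero (τ 0), ← hend, ← sum_range_sub']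
  exact sum_congr rfl fun x hx => hincrement x (mem_range.mp hx)

/-- Closed form for the classical hitting time of the simple random walk on the
`n`-dimensional hypercube: if `τ` satisfies `τ(n) = 0`, `τ(0) = τ(1) + 1` and
`τ(x) = ((n-x)/n) τ(x+1) + (x/n) τ(x-1) + 1` for `1 ≤ x ≤ n-1`, then
`τ(0) = ∑_{x=0}^{n-1} (∑_{j=0}^{x-1} C(n, x-j) + 1) / C(n-1, x)`. -/
theorem hypercube_classical_hitting_time_closed_form
    (n : ℕ) (hn : 1 ≤ n) (τ : ℕ → ℚ)
    (hend : τ n = 0)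
    (h0 : τ 0 = τ 1 + 1)
    (hrec : ∀ x : ℕ, 1 ≤ x → x ≤ n - 1 →
      τ x = ((n : ℚ) - (x : ℚ)) / (n : ℚ) * τ (x + 1)
        + (x : ℚ) / (n : ℚ) * τ (x - 1) + 1) :
    τ 0 = ∑ x ∈ Finset.range n,
      ((∑ j ∈ Finset.range x, (n.choose (x - j) : ℚ)) + 1) / ((n - 1).choose x : ℚ) :=
  hypercube_classical_hitting_time_closed_form_general n τ hend h0 hrec
end

section
/- Infinite hitting times on Cayley graphs from large irreducible representations: let G be a finite group, d ≥ 1, and suppose G has an irreducible complex representation of dimension strictly greater than d. Let U be any unitary operator on V = (G → ℂ) ⊗ ℂ^d commuting with λ(g) ⊗ 1 for every g ∈ G, and let g_f ∈ G with P_f the orthogonal projection of V onto (span of the indicator function of g_f) ⊗ ℂ^d. Then there exist a nonzero vector v ∈ V and μ ∈ ℂ with U v = μ v and P_f v = 0 (an eigenvector of the evolution operator having no overlap with the final vertex for any coin state). -/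
open CategoryTheory

/-- The operator `λ(g) ⊗ 1` on the walk Hilbert space `(G → ℂ) ⊗ ℂ^d`
(modelled as `EuclideanSpace ℂ (G × Fin d)`), where `λ` is the left regular
representation `(λ(g) f)(x) = f (g⁻¹ x)` and the identity acts on the coin. -/
def coinedRegRep (G : Type) [Group G] (d : ℕ) (g : G) :
    EuclideanSpace ℂ (G × Fin d) →ₗ[ℂ] EuclideanSpace ℂ (G × Fin d) where
  toFun v := WithLp.toLp 2 (fun p : G × Fin d => v (g⁻¹ * p.1, p.2))
  map_add' _ _ := by ext; simp
  map_smul' _ _ := by ext; simp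

/-- The orthogonal projection of the walk space `(G → ℂ) ⊗ ℂ^d` onto the
final-vertex subspace `(span of the indicator of g_f) ⊗ ℂ^d`. -/
def finalVertexProj (G : Type) [Group G] [DecidableEq G] (d : ℕ) (gf : G) :
    EuclideanSpace ℂ (G × Fin d) →ₗ[ℂ] EuclideanSpace ℂ (G × Fin d) where
  toFun v := WithLp.toLp 2 (fun p : G × Fin d => (if p.1 = gf then (1 : ℂ) else 0) * v p)
  map_add' x y := by
    ext p
    simp [mul_add]
  map_smul' a x := by
    ext p
    simp [mul_left_comm]

/-!
Since `U` commutes with every `λ(g) ⊗ 1`, post-composition with `U` is an endomorphism of the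
space of `G`-equivariant maps `W → (G → ℂ) ⊗ ℂ^d`. That space is nonzero, because matrix
coefficients `s ↦ (x ↦ φ (ρ(x⁻¹) s))` embed `W` into the regular representation, so over `ℂ` this
endomorphism has an eigenvector `f`, and `f` is injective by Schur's lemma. Thus `f(W)` consists
of eigenvectors of `U` for one eigenvalue, and has dimension `dim W > d`, so evaluation at `g_f`,
a map to `ℂ^d`, kills one of its nonzero vectors.
-/

open Module Representation

namespace FDRep

universe u v

variable {k : Type u} [Field k] {G : Type v} [Monoid G]

theorem nontrivial_of_simple (W : FDRep k G) [Simple W] : Nontrivial W := by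
  by_contra h
  rw [not_nontrivial_iff_subsingleton] at h
  exact id_nonzero W (by ext; exact Subsingleton.elim _ _)

theorem isIrreducible_ρ (W : FDRep k G) [Simple W] : IsIrreducible W.ρ := by
  have := nontrivial_of_simple W
  have : Nontrivial (Subrepresentation W.ρ) :=
    ⟨⊥, ⊤, fun h => bot_ne_top (α := Submodule k W) (congrArg Subrepresentation.toSubmodule h)⟩
  refine ⟨fun K => ?_⟩
  let ι : FDRep.of K.toRepresentation ⟶ W :=
    ⟨FGModuleCat.ofHom K.toSubmodule.subtype, fun _ => rfl⟩
  have : Mono ι := ConcreteCategory.mono_of_injective ι Subtype.val_injective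
  by_cases hι : ι = 0
  · left
    apply Subrepresentation.toSubmodule_injective
    refine (Submodule.eq_bot_iff _).2 fun x hx => ?_
    exact congr(($hι).hom.hom ⟨x, hx⟩)
  · right
    have := isIso_of_mono_of_nonzero hι
    apply Subrepresentation.toSubmodule_injective
    refine Submodule.eq_top_iff'.2 fun x => ?_
    obtain ⟨y, rfl⟩ := (isoToLinearEquiv (asIso ι)).surjective x
    exact y.2

end FDRep

namespace Representation.IntertwiningMap

variable {k G V M N : Type*} [Field k] [IsAlgClosed k] [Monoid G]
  [AddCommGroup V] [Module k V] [FiniteDimensional k V]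
  [AddCommGroup M] [Module k M] [FiniteDimensional k M]
  [AddCommGroup N] [Module k N] [FiniteDimensional k N]
  {ρ : Representation k G V} {σ : Representation k G M}

theorem exists_injective_comp_eq_smul [IsIrreducible ρ]
    [Nontrivial (IntertwiningMap ρ σ)] (U : IntertwiningMap σ σ) :
    ∃ (f : IntertwiningMap ρ σ) (μ : k), Function.Injective f ∧ ∀ v, U (f v) = μ • f v := by
  obtain ⟨μ, hμ⟩ := Module.End.exists_eigenvalue (IntertwiningMap.llcomp ρ σ σ U)
  obtain ⟨f, hf⟩ := hμ.exists_hasEigenvector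
  refine ⟨f, μ, (IsIrreducible.injective_or_eq_zero f).resolve_right hf.2, fun v => ?_⟩
  exact congr($(hf.apply_eq_smul) v)

theorem exists_eigenvector_mem_ker [IsIrreducible ρ]
    [Nontrivial (IntertwiningMap ρ σ)] (U : IntertwiningMap σ σ) (L : M →ₗ[k] N)
    (hN : finrank k N < finrank k V) :
    ∃ w : M, w ≠ 0 ∧ ∃ μ : k, U w = μ • w ∧ w ∈ LinearMap.ker L := by
  obtain ⟨f, μ, hf, hUf⟩ := exists_injective_comp_eq_smul (ρ := ρ) U
  obtain ⟨v, hv, hv0⟩ := Submodule.exists_mem_ne_zero_of_ne_bot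
    (LinearMap.ker_ne_bot_of_finrank_lt (f := L ∘ₗ f.toLinearMap) hN)
  exact ⟨f v, (map_ne_zero_iff f hf).2 hv0, μ, hUf v, hv⟩

end Representation.IntertwiningMap

section CoinedRegular

variable (G : Type) [Group G] (d : ℕ)

def coinedRegRepresentation : Representation ℂ G (EuclideanSpace ℂ (G × Fin d)) where
  toFun := coinedRegRep G d
  map_one' := by ext; simp [coinedRegRep]
  map_mul' _ _ := by ext; simp [coinedRegRep, mul_assoc]

variable {G d} {V : Type*} [AddCommGroup V] [Module ℂ V]

def matrixCoeffIntertwiningMap (ρ : Representation ℂ G V) (φ : Dual ℂ V) (c : Fin d) :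
    IntertwiningMap ρ (coinedRegRepresentation G d) where
  toLinearMap := (WithLp.linearEquiv 2 ℂ (G × Fin d → ℂ)).symm.toLinearMap ∘ₗ
    LinearMap.pi fun p => if p.2 = c then φ ∘ₗ ρ p.1⁻¹ else 0
  isIntertwining' g := by
    ext v p
    by_cases h : p.2 = c <;> simp [h, coinedRegRepresentation, coinedRegRep]

theorem nontrivial_intertwiningMap_coinedRegRepresentation [Nontrivial V]
    (ρ : Representation ℂ G V) (hd : 1 ≤ d) :
    Nontrivial (IntertwiningMap ρ (coinedRegRepresentation G d)) := by
  obtain ⟨v, hv⟩ := exists_ne (0 : V)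
  obtain ⟨φ, hφ⟩ := not_forall.1 (mt (Module.forall_dual_apply_eq_zero_iff ℂ v).1 hv)
  refine ⟨matrixCoeffIntertwiningMap ρ φ ⟨0, hd⟩, 0, fun h => hφ ?_⟩
  simpa [matrixCoeffIntertwiningMap] using congr($h v (1, ⟨0, hd⟩))

theorem finalVertexProj_eq_zero_iff [DecidableEq G] (gf : G) (w : EuclideanSpace ℂ (G × Fin d)) :
    finalVertexProj G d gf w = 0 ↔ ∀ j, w (gf, j) = 0 := by
  simp [finalVertexProj, WithLp.ext_iff, funext_iff, forall_comm (α := G)]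

end CoinedRegular

theorem cayley_walk_eigenvector_avoiding_final_vertex_general
    {G : Type} [Group G] [Fintype G] [DecidableEq G] (d : ℕ) (hd : 1 ≤ d)
    (W : FDRep ℂ G) [Simple W] (hW : d < Module.finrank ℂ W)
    (U : EuclideanSpace ℂ (G × Fin d) →ₗ[ℂ] EuclideanSpace ℂ (G × Fin d))
    (hcomm : ∀ g : G, U * coinedRegRep G d g = coinedRegRep G d g * U)
    (gf : G) :
    ∃ v : EuclideanSpace ℂ (G × Fin d), v ≠ 0 ∧
      ∃ μ : ℂ, U v = μ • v ∧ finalVertexProj G d gf v = 0 := by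
  have := FDRep.nontrivial_of_simple W
  have := FDRep.isIrreducible_ρ W
  have := nontrivial_intertwiningMap_coinedRegRepresentation W.ρ hd
  let fiber : EuclideanSpace ℂ (G × Fin d) →ₗ[ℂ] Fin d → ℂ :=
    LinearMap.funLeft ℂ ℂ (Prod.mk gf) ∘ₗ (WithLp.linearEquiv 2 ℂ (G × Fin d → ℂ)).toLinearMap
  obtain ⟨v, hv, μ, hUv, hfiber⟩ := IntertwiningMap.exists_eigenvector_mem_ker (ρ := W.ρ)
    (σ := coinedRegRepresentation G d) ⟨U, hcomm⟩ fiber (by rwa [finrank_fin_fun])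
  exact ⟨v, hv, μ, hUv, (finalVertexProj_eq_zero_iff gf v).2 (congrFun hfiber)⟩

/-- Infinite hitting times on Cayley graphs from large irreducible representations:
if `G` has an irreducible complex representation `W` of dimension `> d`, then any
unitary `U` on `(G → ℂ) ⊗ ℂ^d` commuting with every `λ(g) ⊗ 1` has an eigenvector
with no overlap with the final vertex `g_f` for any coin state. -/
theorem cayley_walk_eigenvector_avoiding_final_vertex
    {G : Type} [Group G] [Fintype G] [DecidableEq G] (d : ℕ) (hd : 1 ≤ d)
    (W : FDRep ℂ G) [Simple W] (hW : d < Module.finrank ℂ W)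
    (U : EuclideanSpace ℂ (G × Fin d) →ₗ[ℂ] EuclideanSpace ℂ (G × Fin d))
    (hU : U ∈ unitary (EuclideanSpace ℂ (G × Fin d) →ₗ[ℂ] EuclideanSpace ℂ (G × Fin d)))
    (hcomm : ∀ g : G, U * coinedRegRep G d g = coinedRegRep G d g * U)
    (gf : G) :
    ∃ v : EuclideanSpace ℂ (G × Fin d), v ≠ 0 ∧
      ∃ μ : ℂ, U v = μ • v ∧ finalVertexProj G d gf v = 0 :=
  cayley_walk_eigenvector_avoiding_final_vertex_general d hd W hW U hcomm gf
end

section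
/- Decoherence-free subspace criterion for Kraus dynamics: let V be a finite-dimensional complex inner product space, let A_1, …, A_m : V → V be linear operators satisfying Σ_i A_i† A_i = 1, and let W be a nonzero subspace of V. Then the following are equivalent: (i) for every unit vector j ∈ W, Σ_i A_i π_j A_i† = π_j, where π_j is the orthogonal projection onto the span of j; (ii) there exist scalars c_1, …, c_m ∈ ℂ with Σ_i |c_i|² = 1 such that A_i j = c_i • j for every j ∈ W and every i. -/
/-!
Since `A π_j A† = π_{A j}`, condition (i) reads `∑ i, π_{A_i j} = π_j`. Pairing with `j` gives
`∑ i, |⟪j, A_i j⟫|² = 1 = ∑ i, ‖A_i j‖²`, the second equality being the Kraus normalisation.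
Termwise Cauchy–Schwarz then forces equality in every term, so every unit vector of `W` is an
eigenvector of every `A_i`; a linear map for which every vector of a subspace is an eigenvector
acts on it as a single scalar `c_i`, and the normalisation gives `∑ i, |c_i|² = 1`.
Conversely `π_{c j} = |c|² π_j`.
-/

open scoped InnerProductSpace ComplexConjugate

/-- The rank-one operator `v ↦ ⟪j, v⟫ • j`; for a unit vector `j` this is the
orthogonal projection `π_j` onto the span of `j`. -/
noncomputable def lineProj {V : Type*} [NormedAddCommGroup V] [InnerProductSpace ℂ V]
    (j : V) : V →ₗ[ℂ] V :=
  LinearMap.smulRight ((innerSL ℂ j).toLinearMap) j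

theorem LinearMap.exists_forall_mem_apply_eq_smul {K V : Type*} [Field K] [AddCommGroup V]
    [Module K V] (f : V →ₗ[K] V) {W : Submodule K V} (h : ∀ w ∈ W, ∃ a : K, f w = a • w) :
    ∃ c : K, ∀ w ∈ W, f w = c • w := by
  have hmaps : ∀ w ∈ W, f w ∈ W := fun w hw => by
    obtain ⟨a, ha⟩ := h w hw
    exact ha ▸ W.smul_mem a hw
  obtain ⟨c, hc⟩ := (f.restrict hmaps).exists_eq_smul_id_of_forall_notLinearIndependent
    fun w hli => by
      obtain ⟨a, ha⟩ := h w w.2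
      have hfw : f.restrict hmaps w = a • w := Subtype.ext ha
      have := LinearIndependent.pair_iff.1 hli a (-1) (by rw [hfw]; module)
      exact one_ne_zero (neg_eq_zero.1 this.2)
  exact ⟨c, fun w hw => congrArg Subtype.val (LinearMap.congr_fun hc ⟨w, hw⟩)⟩

section RCLike

variable {𝕜 E : Type*} [RCLike 𝕜] [NormedAddCommGroup E]

theorem LinearMap.exists_forall_mem_apply_eq_smul_of_norm_eq_one [NormedSpace 𝕜 E]
    (f : E →ₗ[𝕜] E) {W : Submodule 𝕜 E} (h : ∀ u ∈ W, ‖u‖ = 1 → ∃ a : 𝕜, f u = a • u) :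
    ∃ c : 𝕜, ∀ w ∈ W, f w = c • w := by
  refine f.exists_forall_mem_apply_eq_smul fun w hw => ?_
  rcases eq_or_ne w 0 with rfl | hw0
  · exact ⟨0, by simp⟩
  obtain ⟨a, ha⟩ := h _ (W.smul_mem (‖w‖⁻¹ : 𝕜) hw) (norm_smul_inv_norm hw0)
  have hw_eq : w = (‖w‖ : 𝕜) • (‖w‖⁻¹ : 𝕜) • w := by
    rw [smul_smul, mul_inv_cancel₀ (by exact_mod_cast norm_ne_zero_iff.2 hw0), one_smul]
  refine ⟨a, ?_⟩
  rw [hw_eq, map_smul, ha, smul_comm]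

variable [InnerProductSpace 𝕜 E]

theorem eq_inner_smul_of_norm_inner_eq {x y : E} (hx : ‖x‖ = 1) (h : ‖⟪x, y⟫_𝕜‖ = ‖y‖) :
    y = ⟪x, y⟫_𝕜 • x := by
  have hx0 : x ≠ 0 := norm_ne_zero_iff.1 (by rw [hx]; exact one_ne_zero)
  have := ((norm_inner_eq_norm_tfae 𝕜 x y).out 0 1).1 (by rw [hx, one_mul, h])
  simpa [hx] using this.resolve_left hx0

theorem sum_norm_sq_apply_eq_norm_sq [FiniteDimensional 𝕜 E] {ι : Type*} [Fintype ι]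
    (A : ι → E →ₗ[𝕜] E) (hA : ∑ i, LinearMap.adjoint (A i) * A i = 1) (v : E) :
    ∑ i, ‖A i v‖ ^ 2 = ‖v‖ ^ 2 := by
  have h : ⟪v, (∑ i, LinearMap.adjoint (A i) * A i) v⟫_𝕜 = ⟪v, v⟫_𝕜 := by rw [hA]; rfl
  simp only [LinearMap.sum_apply, inner_sum, Module.End.mul_apply,
    LinearMap.adjoint_inner_right, inner_self_eq_norm_sq_to_K] at h
  exact_mod_cast h

end RCLike

section lineProj

variable {V : Type*} [NormedAddCommGroup V] [InnerProductSpace ℂ V]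

theorem lineProj_apply (j v : V) : lineProj j v = ⟪j, v⟫_ℂ • j := rfl

theorem lineProj_smul (c : ℂ) (j : V) : lineProj (c • j) = ((‖c‖ : ℂ) ^ 2) • lineProj j := by
  ext v
  simp only [lineProj_apply, LinearMap.smul_apply, inner_smul_left, smul_smul]
  rw [← Complex.conj_mul']
  ring_nf

theorem inner_lineProj_apply_self (x y : V) : ⟪x, lineProj y x⟫_ℂ = (‖⟪x, y⟫_ℂ‖ : ℂ) ^ 2 := by
  rw [lineProj_apply, inner_smul_right, ← inner_conj_symm y x, Complex.conj_mul']

theorem mul_lineProj_mul_adjoint [FiniteDimensional ℂ V] (A : V →ₗ[ℂ] V) (j : V) :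
    A * lineProj j * LinearMap.adjoint A = lineProj (A j) := by
  ext v
  simp only [Module.End.mul_apply, lineProj_apply, LinearMap.adjoint_inner_right, map_smul]

theorem apply_eq_inner_smul_of_sum_lineProj_eq [FiniteDimensional ℂ V] {ι : Type*} [Fintype ι]
    (A : ι → V →ₗ[ℂ] V) (hA : ∑ i, LinearMap.adjoint (A i) * A i = 1) {j : V} (hj : ‖j‖ = 1)
    (h : ∑ i, lineProj (A i j) = lineProj j) (i : ι) : A i j = ⟪j, A i j⟫_ℂ • j := by
  have hsum : ∑ i, ‖⟪j, A i j⟫_ℂ‖ ^ 2 = ∑ i, ‖A i j‖ ^ 2 := by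
    have h' := congrArg (fun T : V →ₗ[ℂ] V => ⟪j, T j⟫_ℂ) h
    simp only [LinearMap.sum_apply, inner_sum, inner_lineProj_apply_self,
      inner_self_eq_norm_sq_to_K, hj] at h'
    rw [sum_norm_sq_apply_eq_norm_sq A hA, hj]
    exact_mod_cast h'
  have hle : ∀ i ∈ Finset.univ, ‖⟪j, A i j⟫_ℂ‖ ^ 2 ≤ ‖A i j‖ ^ 2 := fun i _ => by
    gcongr
    simpa [hj] using norm_inner_le_norm (𝕜 := ℂ) j (A i j)
  refine eq_inner_smul_of_norm_inner_eq hj ?_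
  exact (pow_left_inj₀ (norm_nonneg _) (norm_nonneg _) two_ne_zero).1
    ((Finset.sum_eq_sum_iff_of_le hle).1 hsum i (Finset.mem_univ i))

end lineProj

/-- Decoherence-free subspace criterion for Kraus dynamics: given Kraus operators
`A_i` with `∑ i, A_i† A_i = 1` and a nonzero subspace `W`, the following are
equivalent: (i) for every unit vector `j ∈ W`, `∑ i, A_i π_j A_i† = π_j`;
(ii) there are scalars `c_i` with `∑ i, |c_i|² = 1` such that `A_i j = c_i • j`
for every `j ∈ W` and every `i`. -/
theorem dfs_criterion_kraus
    {V : Type*} [NormedAddCommGroup V] [InnerProductSpace ℂ V] [FiniteDimensional ℂ V]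
    {m : ℕ} (A : Fin m → (V →ₗ[ℂ] V))
    (hA : ∑ i, LinearMap.adjoint (A i) * A i = 1)
    (W : Submodule ℂ V) (hW : W ≠ ⊥) :
    (∀ j : V, j ∈ W → ‖j‖ = 1 →
        ∑ i, A i * lineProj j * LinearMap.adjoint (A i) = lineProj j) ↔
      (∃ c : Fin m → ℂ, ∑ i, ‖c i‖ ^ 2 = 1 ∧ ∀ j ∈ W, ∀ i, A i j = c i • j) := by
  simp only [mul_lineProj_mul_adjoint]
  constructor
  · intro h
    choose c hc using fun i => (A i).exists_forall_mem_apply_eq_smul_of_norm_eq_one fun u hu hu1 =>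
      ⟨_, apply_eq_inner_smul_of_sum_lineProj_eq A hA hu1 (h u hu hu1) i⟩
    obtain ⟨v, hv, hv0⟩ := W.ne_bot_iff.1 hW
    obtain ⟨u, hu, hu1⟩ : ∃ u ∈ W, ‖u‖ = 1 :=
      ⟨_, W.smul_mem (‖v‖⁻¹ : ℂ) hv, norm_smul_inv_norm hv0⟩
    refine ⟨c, ?_, fun j hj i => hc i j hj⟩
    simpa [hc _ u hu, norm_smul, hu1] using sum_norm_sq_apply_eq_norm_sq A hA u
  · rintro ⟨c, hc1, hc⟩ j hj -
    simp only [hc j hj, lineProj_smul, ← Finset.sum_smul]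
    have hc1' : ∑ i, (‖c i‖ : ℂ) ^ 2 = 1 := by exact_mod_cast hc1
    rw [hc1', one_smul]
end
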